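/- arXiv:2203.13589 — 4 statements merged into one kernel-verified Lean document; each statement's English description precedes it below -/
import Mathlib

section
/- If A(t) satisfies a Lax equation dA/dt = [B(t), A(t)], then the characteristic polynomial of A(t) is independent of t; in particular the coefficients of the characteristic polynomial are constants of motion. -/
attribute [local instance] Matrix.normedAddCommGroup Matrix.normedSpace

open Matrix Finset

/-- The Leibniz-formula derivative of the determinant: if every entry of `M t` has derivative
the corresponding entry of `N`, then `det (M t)` has derivative `tr (adj (M t₀) * N)`. -/
private lemma hasDerivAt_det_trace {n : ℕ} (M : ℝ → Matrix (Fin n) (Fin n) ℝ)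
    (N : Matrix (Fin n) (Fin n) ℝ) (t₀ : ℝ)
    (h : ∀ i j, HasDerivAt (fun t => M t i j) (N i j) t₀) :
    HasDerivAt (fun t => (M t).det) ((Matrix.adjugate (M t₀) * N).trace) t₀ := by
  have key : HasDerivAt (fun t => (M t).det)
      (∑ σ : Equiv.Perm (Fin n), ((Equiv.Perm.sign σ : ℤ) : ℝ) *
        ∑ i, (∏ j ∈ univ.erase i, M t₀ (σ j) j) • N (σ i) i) t₀ := by
    simp only [Matrix.det_apply']
    exact HasDerivAt.fun_sum fun σ _ =>
      (HasDerivAt.fun_finsetProd (fun i _ => h (σ i) i)).const_mul _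
  convert key using 1
  have col : ∀ i : Fin n,
      ((M t₀).updateCol i (fun k => N k i)).det =
        ∑ σ : Equiv.Perm (Fin n), ((Equiv.Perm.sign σ : ℤ) : ℝ) *
          ((∏ j ∈ univ.erase i, M t₀ (σ j) j) * N (σ i) i) := by
    intro i
    rw [Matrix.det_apply']
    refine Finset.sum_congr rfl fun σ _ => ?_
    congr 1
    rw [← Finset.mul_prod_erase univ _ (mem_univ i), Matrix.updateCol_self, mul_comm]
    congr 1
    exact Finset.prod_congr rfl fun j hj =>
      Matrix.updateCol_ne (Finset.ne_of_mem_erase hj)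
  have lhs_eq : (Matrix.adjugate (M t₀) * N).trace =
      ∑ i, ((M t₀).updateCol i (fun k => N k i)).det := by
    have : ∀ i : Fin n, ((M t₀).updateCol i (fun k => N k i)).det =
        (Matrix.cramer (M t₀) (fun k => N k i)) i := fun i =>
      (Matrix.cramer_apply _ _ _).symm
    simp only [this, Matrix.cramer_eq_adjugate_mulVec]
    simp [Matrix.trace, Matrix.diag, Matrix.mul_apply, Matrix.mulVec, dotProduct]
  rw [lhs_eq]
  simp only [col, smul_eq_mul]
  rw [Finset.sum_comm]
  exact Finset.sum_congr rfl fun σ _ => by rw [Finset.mul_sum]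

private lemma trace_adjugate_comm {n : ℕ} (M B : Matrix (Fin n) (Fin n) ℝ) :
    (Matrix.adjugate M * (B * M - M * B)).trace = 0 := by
  have h1 : (Matrix.adjugate M * (B * M)).trace = M.det * B.trace := by
    rw [Matrix.trace_mul_comm, mul_assoc, Matrix.mul_adjugate]
    simp [Matrix.mul_smul]
  have h2 : (Matrix.adjugate M * (M * B)).trace = M.det * B.trace := by
    rw [← mul_assoc, Matrix.adjugate_mul]
    simp [Matrix.smul_mul]
  rw [mul_sub, Matrix.trace_sub, h1, h2, sub_self]

/-- If `A(t)` satisfies a Lax equation `A' = [B, A]`, then the characteristic polynomial of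
`A(t)` is independent of `t`; in particular its coefficients are constants of motion. -/
theorem charpoly_const_of_lax {n : ℕ}
    (A B : ℝ → Matrix (Fin n) (Fin n) ℝ)
    (hA : ContDiff ℝ (⊤ : ℕ∞) fun t => A t) (hB : ContDiff ℝ (⊤ : ℕ∞) fun t => B t)
    (hLax : ∀ t : ℝ, HasDerivAt A (B t * A t - A t * B t) t) :
    ∀ t s : ℝ, (A t).charpoly = (A s).charpoly := by
  -- the key: for each real r, `t ↦ det (r • 1 - A t)` is constant.
  have entry : ∀ (t : ℝ) (i j : Fin n),
      HasDerivAt (fun u => A u i j) ((B t * A t - A t * B t) i j) t := by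
    intro t i j
    have h1 := (hasDerivAt_pi.1 (hLax t)) i
    exact (hasDerivAt_pi.1 h1) j
  have main : ∀ r : ℝ, ∀ t s : ℝ,
      (r • (1 : Matrix (Fin n) (Fin n) ℝ) - A t).det
        = (r • (1 : Matrix (Fin n) (Fin n) ℝ) - A s).det := by
    intro r
    set M : ℝ → Matrix (Fin n) (Fin n) ℝ :=
      fun t => r • (1 : Matrix (Fin n) (Fin n) ℝ) - A t with hM
    have hder : ∀ t : ℝ, HasDerivAt (fun u => (M u).det) 0 t := by
      intro t
      have hcomm : B t * M t - M t * B t = -(B t * A t - A t * B t) := by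
        simp only [hM]
        noncomm_ring
      have hent : ∀ i j, HasDerivAt (fun u => M u i j)
          ((B t * M t - M t * B t) i j) t := by
        intro i j
        rw [hcomm]
        have h0 := (entry t i j).const_sub ((r • (1 : Matrix (Fin n) (Fin n) ℝ)) i j)
        simpa [hM, Matrix.sub_apply, Matrix.neg_apply] using h0
      have := hasDerivAt_det_trace M (B t * M t - M t * B t) t hent
      rwa [trace_adjugate_comm (M t) (B t)] at this
    intro t s
    have hdiff : Differentiable ℝ fun u => (M u).det := fun u => (hder u).differentiableAt
    have hzero : ∀ u : ℝ, deriv (fun u => (M u).det) u = 0 := fun u => (hder u).deriv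
    exact is_const_of_deriv_eq_zero hdiff hzero t s
  intro t s
  apply Polynomial.funext
  intro r
  have ev : ∀ u : ℝ, ((A u).charpoly).eval r
      = (r • (1 : Matrix (Fin n) (Fin n) ℝ) - A u).det := by
    intro u
    rw [Matrix.charpoly, ← Polynomial.coe_evalRingHom, RingHom.map_det]
    congr 1
    ext i j
    by_cases h : i = j <;>
      simp [Matrix.charmatrix_apply, h, Matrix.one_apply, Matrix.sub_apply, Matrix.smul_apply,
        Matrix.diagonal_apply]
  rw [ev t, ev s, main r t s]
end

section
/- Let X be a divergence-free vector field on an oriented manifold (M, Ω), and Y a vector field with [X, Y] = 0. Then div(Y) is a first integral of X: X(div Y) = 0. -/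
noncomputable section

variable {E : Type*} [NormedAddCommGroup E] [NormedSpace ℝ E]

/-- Pointwise Lie derivative of a (pointwise applied) `k`-form along a vector field `X`:
`(L_X ω)(x)(v₁,…,v_k) = D(ω(·)(v))(x)(X x) + ∑ᵢ ω(x)(v₁,…,DX(x)vᵢ,…,v_k)`. -/
def lieDerivApply {k : ℕ} (X : E → E) (ω : E → (Fin k → E) → ℝ) (x : E) (v : Fin k → E) : ℝ :=
  fderiv ℝ (fun y => ω y v) x (X x) +
    ∑ i : Fin k, ω x (Function.update v i (fderiv ℝ X x (v i)))

/-- Lie bracket of two vector fields: `[X, Y](x) = DY(x)(X x) - DX(x)(Y x)`. -/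
def lieBracket (X Y : E → E) (x : E) : E :=
  fderiv ℝ Y x (X x) - fderiv ℝ X x (Y x)

lemma sum_det_update_eq_trace {n : ℕ} {M : Type*} [AddCommGroup M] [Module ℝ M]
    (b : Module.Basis (Fin n) ℝ M) (P : M →ₗ[ℝ] M) :
    ∑ i, b.det (Function.update ⇑b i (P (b i))) = Matrix.trace (LinearMap.toMatrix b b P) := by
  classical
  have hterm : ∀ i : Fin n, b.det (Function.update ⇑b i (P (b i)))
      = LinearMap.toMatrix b b P i i := by
    intro i
    have hP : P (b i) = ∑ j, LinearMap.toMatrix b b P j i • b j := by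
      conv_lhs => rw [← b.sum_repr (P (b i))]
      simp [LinearMap.toMatrix_apply]
    have hL : ∀ v, b.det (Function.update ⇑b i v)
        = (b.det.toMultilinearMap.toLinearMap ⇑b i) v := fun v => rfl
    rw [hP, hL, map_sum]
    have hij : ∀ j, (b.det.toMultilinearMap.toLinearMap ⇑b i) (LinearMap.toMatrix b b P j i • b j)
        = if j = i then LinearMap.toMatrix b b P j i else 0 := by
      intro j
      rw [map_smul]
      by_cases h : j = i
      · subst h
        simp [MultilinearMap.toLinearMap_apply, Function.update_eq_self, Module.Basis.det_self]
      · have hz : b.det (Function.update ⇑b i (b j)) = 0 := by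
          apply b.det.map_eq_zero_of_eq _ (i := i) (j := j)
          · simp [Function.update_self, Function.update_of_ne h]
          · exact fun hc => h hc.symm
        simp [MultilinearMap.toLinearMap_apply, hz, h]
    simp only [hij]
    simp
  simp only [hterm]
  simp [Matrix.trace]

lemma sum_det_update_comm {n : ℕ} {M : Type*} [AddCommGroup M] [Module ℝ M]
    (b : Module.Basis (Fin n) ℝ M) (A B : M →ₗ[ℝ] M) :
    ∑ i, b.det (Function.update ⇑b i (A (B (b i))))
      = ∑ i, b.det (Function.update ⇑b i (B (A (b i)))) := by
  have h1 := sum_det_update_eq_trace b (A ∘ₗ B)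
  have h2 := sum_det_update_eq_trace b (B ∘ₗ A)
  simp only [LinearMap.comp_apply] at h1 h2
  rw [h1, h2, LinearMap.toMatrix_comp b b b, LinearMap.toMatrix_comp b b b,
    Matrix.trace_mul_comm]

set_option maxHeartbeats 2000000

/-- Let `X` be a smooth divergence-free vector field on an oriented `n`-manifold `(M, Ω)`
(modelled on `ℝⁿ`, with `Ω` a smooth nowhere-vanishing `n`-form), i.e. `L_X Ω = 0`, and
`Y` a smooth vector field with `[X, Y] = 0`. Then `div Y` (defined by `L_Y Ω = (div Y)·Ω`)
is a first integral of `X`: `X(div Y) = 0`. -/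
theorem div_first_integral_of_commuting_symmetry {n : ℕ}
    (Ω : EuclideanSpace ℝ (Fin n) → (EuclideanSpace ℝ (Fin n) [⋀^Fin n]→L[ℝ] ℝ))
    (X Y : EuclideanSpace ℝ (Fin n) → EuclideanSpace ℝ (Fin n))
    (divY : EuclideanSpace ℝ (Fin n) → ℝ)
    (hΩ : ∀ v, ContDiff ℝ (⊤ : ℕ∞) fun x => Ω x v)
    (hΩne : ∀ x, Ω x ≠ 0)
    (hX : ContDiff ℝ (⊤ : ℕ∞) X) (hY : ContDiff ℝ (⊤ : ℕ∞) Y)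
    (hdivXzero : ∀ x v, lieDerivApply X (fun y u => Ω y u) x v = 0)
    (hdivY : ∀ x v, lieDerivApply Y (fun y u => Ω y u) x v = divY x * Ω x v)
    (hcomm : ∀ x, lieBracket X Y x = 0) :
    ∀ x, fderiv ℝ divY x (X x) = 0 := by
  classical
  intro x
  let b : Module.Basis (Fin n) ℝ (EuclideanSpace ℝ (Fin n)) := (EuclideanSpace.basisFun (Fin n) ℝ).toBasis
  set d := b.det with hd
  set c : EuclideanSpace ℝ (Fin n) → ℝ := fun z => Ω z ⇑b with hcdef
  -- representation
  have hrep : ∀ z v, Ω z v = c z * d v := by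
    intro z v
    have h := (Ω z).toAlternatingMap.eq_smul_basis_det b
    calc Ω z v = (Ω z).toAlternatingMap v := rfl
      _ = ((Ω z).toAlternatingMap ⇑b • b.det) v := by rw [← h]
      _ = c z * d v := by rw [AlternatingMap.smul_apply]; rfl
  have hc : ContDiff ℝ (⊤ : ℕ∞) c := hΩ ⇑b
  have hcne : ∀ z, c z ≠ 0 := by
    intro z hz
    apply hΩne z
    ext v
    have := hrep z v
    rw [hz, zero_mul] at this
    simpa using this
  -- scalar objects
  set gX : EuclideanSpace ℝ (Fin n) → ℝ := fun z => ∑ i, d (Function.update ⇑b i (fderiv ℝ X z (b i))) with hgXdef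
  set gY : EuclideanSpace ℝ (Fin n) → ℝ := fun z => ∑ i, d (Function.update ⇑b i (fderiv ℝ Y z (b i))) with hgYdef
  have hA : ∀ z, fderiv ℝ c z (X z) + c z * gX z = 0 := by
    intro z
    have h0 := hdivXzero z ⇑b
    simp only [lieDerivApply] at h0
    have e1 : (fun y => Ω y ⇑b) = c := rfl
    rw [e1] at h0
    rw [hgXdef, Finset.mul_sum]
    simp only [← hrep]
    exact h0
  have hB : ∀ z, fderiv ℝ c z (Y z) + c z * gY z = divY z * c z := by
    intro z
    have h0 := hdivY z ⇑b
    simp only [lieDerivApply] at h0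
    have e1 : (fun y => Ω y ⇑b) = c := rfl
    rw [e1] at h0
    rw [hgYdef, Finset.mul_sum]
    simp only [← hrep]
    exact h0
  have hC : ∀ z, fderiv ℝ Y z (X z) = fderiv ℝ X z (Y z) := by
    intro z
    have h0 := hcomm z
    simp only [lieBracket] at h0
    exact sub_eq_zero.mp h0
  -- differentiability facts
  have hXd : ∀ z, HasFDerivAt X (fderiv ℝ X z) z :=
    fun z => (hX.differentiable (by simp) z).hasFDerivAt
  have hYd : ∀ z, HasFDerivAt Y (fderiv ℝ Y z) z :=
    fun z => (hY.differentiable (by simp) z).hasFDerivAt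
  have hcd : ∀ z, HasFDerivAt c (fderiv ℝ c z) z :=
    fun z => (hc.differentiable (by simp) z).hasFDerivAt
  have hX2 : HasFDerivAt (fderiv ℝ X) (fderiv ℝ (fderiv ℝ X) x) x :=
    (((hX.fderiv_right (m := (⊤ : ℕ∞)) (by simp)).differentiable (by simp)) x).hasFDerivAt
  have hY2 : HasFDerivAt (fderiv ℝ Y) (fderiv ℝ (fderiv ℝ Y) x) x :=
    (((hY.fderiv_right (m := (⊤ : ℕ∞)) (by simp)).differentiable (by simp)) x).hasFDerivAt
  have hc2 : HasFDerivAt (fderiv ℝ c) (fderiv ℝ (fderiv ℝ c) x) x :=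
    (((hc.fderiv_right (m := (⊤ : ℕ∞)) (by simp)).differentiable (by simp)) x).hasFDerivAt
  set A := fderiv ℝ X x with hAdef
  set B := fderiv ℝ Y x with hBdef
  set X'' := fderiv ℝ (fderiv ℝ X) x with hX''def
  set Y'' := fderiv ℝ (fderiv ℝ Y) x with hY''def
  set c'' := fderiv ℝ (fderiv ℝ c) x with hc''def
  have hsymX : ∀ v w, X'' v w = X'' w v := second_derivative_symmetric hXd hX2
  have hsymY : ∀ v w, Y'' v w = Y'' w v := second_derivative_symmetric hYd hY2
  have hsymc : ∀ v w, c'' v w = c'' w v := second_derivative_symmetric hcd hc2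
  -- the linear functionals
  let L : Fin n → (EuclideanSpace ℝ (Fin n) →L[ℝ] ℝ) :=
    fun i => LinearMap.toContinuousLinearMap (d.toMultilinearMap.toLinearMap ⇑b i)
  have hLapp : ∀ i v, L i v = d (Function.update ⇑b i v) := fun i v => rfl
  -- derivative of g_Z
  have hg : ∀ (Z : EuclideanSpace ℝ (Fin n) → EuclideanSpace ℝ (Fin n)),
      HasFDerivAt (fderiv ℝ Z) (fderiv ℝ (fderiv ℝ Z) x) x →
      HasFDerivAt (fun z => ∑ i, d (Function.update ⇑b i (fderiv ℝ Z z (b i))))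
        (∑ i, (L i).comp ((ContinuousLinearMap.apply ℝ (EuclideanSpace ℝ (Fin n)) (b i)).comp
          (fderiv ℝ (fderiv ℝ Z) x))) x := by
    intro Z hZ2
    apply HasFDerivAt.fun_sum
    intro i _
    have h2 : HasFDerivAt (fun z => fderiv ℝ Z z (b i))
        ((ContinuousLinearMap.apply ℝ (EuclideanSpace ℝ (Fin n)) (b i)).comp
          (fderiv ℝ (fderiv ℝ Z) x)) x :=
      ((ContinuousLinearMap.apply ℝ (EuclideanSpace ℝ (Fin n)) (b i)).hasFDerivAt).comp x hZ2
    exact ((L i).hasFDerivAt).comp x h2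
  have hgX : HasFDerivAt gX
      (∑ i, (L i).comp ((ContinuousLinearMap.apply ℝ (EuclideanSpace ℝ (Fin n)) (b i)).comp
        X'')) x := hg X hX2
  have hgY : HasFDerivAt gY
      (∑ i, (L i).comp ((ContinuousLinearMap.apply ℝ (EuclideanSpace ℝ (Fin n)) (b i)).comp
        Y'')) x := hg Y hY2
  -- differentiate the identity hA along Y x
  have hF : HasFDerivAt (fun z => fderiv ℝ c z (X z) + c z * gX z)
      ((((fderiv ℝ c x).comp A + c''.flip (X x))
        + (c x • (∑ i, (L i).comp ((ContinuousLinearMap.apply ℝ (EuclideanSpace ℝ (Fin n)) (b i)).comp X''))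
          + gX x • fderiv ℝ c x))) x :=
    (hc2.clm_apply (hXd x)).add ((hcd x).mul hgX)
  have hDF0 : (((fderiv ℝ c x).comp A + c''.flip (X x))
        + (c x • (∑ i, (L i).comp ((ContinuousLinearMap.apply ℝ (EuclideanSpace ℝ (Fin n)) (b i)).comp X''))
          + gX x • fderiv ℝ c x)) = 0 := by
    refine hF.unique ?_
    have he : (fun z => fderiv ℝ c z (X z) + c z * gX z) = fun _ => (0:ℝ) := funext hA
    rw [he]
    exact hasFDerivAt_const 0 x
  have eqA : ∀ w, fderiv ℝ c x (A w) + c'' w (X x)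
      + (c x * ∑ i, L i (X'' w (b i)) + gX x * fderiv ℝ c x w) = 0 := by
    intro w
    have h := ContinuousLinearMap.ext_iff.mp hDF0 w
    simpa [ContinuousLinearMap.add_apply, ContinuousLinearMap.coe_comp', Function.comp_apply,
      ContinuousLinearMap.flip_apply, ContinuousLinearMap.smul_apply,
      ContinuousLinearMap.coe_sum', Finset.sum_apply, smul_eq_mul, Finset.mul_sum,
      ContinuousLinearMap.apply_apply] using h
  -- differentiate the commutation identity
  have hGF : HasFDerivAt (fun z => fderiv ℝ Y z (X z) - fderiv ℝ X z (Y z))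
      ((B.comp A + Y''.flip (X x)) - (A.comp B + X''.flip (Y x))) x :=
    (hY2.clm_apply (hXd x)).sub (hX2.clm_apply (hYd x))
  have hDG0 : (B.comp A + Y''.flip (X x)) - (A.comp B + X''.flip (Y x)) = 0 := by
    refine hGF.unique ?_
    have he : (fun z => fderiv ℝ Y z (X z) - fderiv ℝ X z (Y z))
        = fun _ => (0 : EuclideanSpace ℝ (Fin n)) :=
      funext fun z => sub_eq_zero.mpr (hC z)
    rw [he]
    exact hasFDerivAt_const 0 x
  have eqG : ∀ w, Y'' w (X x) = X'' w (Y x) + A (B w) - B (A w) := by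
    intro w
    have h := ContinuousLinearMap.ext_iff.mp hDG0 w
    simp only [ContinuousLinearMap.sub_apply, ContinuousLinearMap.add_apply,
      ContinuousLinearMap.coe_comp', Function.comp_apply, ContinuousLinearMap.flip_apply,
      ContinuousLinearMap.zero_apply, sub_eq_zero] at h
    -- h : B (A w) + Y'' w (X x) = A (B w) + X'' w (Y x)
    have h' : Y'' w (X x) = A (B w) + X'' w (Y x) - B (A w) := by rw [← h]; abel
    rw [h']
    abel
  -- derivative of H = c'(Y) + c * gY
  have hH : HasFDerivAt (fun z => fderiv ℝ c z (Y z) + c z * gY z)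
      ((((fderiv ℝ c x).comp B + c''.flip (Y x))
        + (c x • (∑ i, (L i).comp ((ContinuousLinearMap.apply ℝ (EuclideanSpace ℝ (Fin n)) (b i)).comp Y''))
          + gY x • fderiv ℝ c x))) x :=
    (hc2.clm_apply (hYd x)).add ((hcd x).mul hgY)
  -- divY is differentiable at x
  have hdivYeq : divY = fun z => (fderiv ℝ c z (Y z) + c z * gY z) * (c z)⁻¹ := by
    funext z
    rw [← div_eq_mul_inv, eq_div_iff (hcne z)]
    exact (hB z).symm
  have hdiff : DifferentiableAt ℝ divY x := by
    rw [hdivYeq]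
    exact (hH.differentiableAt.mul (((hcd x).differentiableAt).inv (hcne x)))
  -- differentiate divY * c = H
  have hprod : HasFDerivAt (fun z => divY z * c z)
      (divY x • fderiv ℝ c x + c x • fderiv ℝ divY x) x :=
    (hdiff.hasFDerivAt).mul (hcd x)
  have hprodH : (fun z => divY z * c z) = (fun z => fderiv ℝ c z (Y z) + c z * gY z) :=
    funext fun z => (hB z).symm
  have huniq : divY x • fderiv ℝ c x + c x • fderiv ℝ divY x
      = (((fderiv ℝ c x).comp B + c''.flip (Y x))
        + (c x • (∑ i, (L i).comp ((ContinuousLinearMap.apply ℝ (EuclideanSpace ℝ (Fin n)) (b i)).comp Y''))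
          + gY x • fderiv ℝ c x)) := by
    refine HasFDerivAt.unique ?_ hH
    rw [← hprodH]
    exact hprod
  have hval : divY x * fderiv ℝ c x (X x) + c x * fderiv ℝ divY x (X x)
      = fderiv ℝ c x (B (X x)) + c'' (X x) (Y x)
        + (c x * ∑ i, L i (Y'' (X x) (b i)) + gY x * fderiv ℝ c x (X x)) := by
    have h := ContinuousLinearMap.ext_iff.mp huniq (X x)
    simpa [ContinuousLinearMap.add_apply, ContinuousLinearMap.coe_comp', Function.comp_apply,
      ContinuousLinearMap.flip_apply, ContinuousLinearMap.smul_apply,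
      ContinuousLinearMap.coe_sum', Finset.sum_apply, smul_eq_mul, Finset.mul_sum,
      ContinuousLinearMap.apply_apply] using h
  -- the key trace computation
  have s2 : ∑ i, L i (Y'' (X x) (b i)) = ∑ i, L i (X'' (Y x) (b i)) := by
    have s1 : ∀ i : Fin n, Y'' (X x) (b i) = X'' (Y x) (b i) + A (B (b i)) - B (A (b i)) := by
      intro i
      rw [hsymY (X x) (b i), eqG (b i), hsymX (b i) (Y x)]
    have s3 : ∑ i, L i (A (B (b i))) = ∑ i, L i (B (A (b i))) := by
      have hcomm2 := sum_det_update_comm b A.toLinearMap B.toLinearMap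
      simp only [ContinuousLinearMap.coe_coe, ← hd] at hcomm2
      simpa only [hLapp] using hcomm2
    calc ∑ i, L i (Y'' (X x) (b i))
        = ∑ i, (L i (X'' (Y x) (b i)) + L i (A (B (b i))) - L i (B (A (b i)))) := by
          refine Finset.sum_congr rfl fun i _ => ?_
          rw [s1 i, map_sub, map_add]
      _ = ∑ i, L i (X'' (Y x) (b i)) + ∑ i, L i (A (B (b i))) - ∑ i, L i (B (A (b i))) := by
          rw [Finset.sum_sub_distrib, Finset.sum_add_distrib]
      _ = ∑ i, L i (X'' (Y x) (b i)) := by rw [s3]; ring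
  have key := eqA (Y x)
  -- combine everything
  have hCx : B (X x) = A (Y x) := hC x
  have hsc : c'' (X x) (Y x) = c'' (Y x) (X x) := hsymc (X x) (Y x)
  have hAx := hA x
  have hBx := hB x
  have hzero : c x * fderiv ℝ divY x (X x) = 0 := by
    rw [s2, hCx, hsc] at hval
    linear_combination hval + key + (gY x - divY x) * hAx - gX x * hBx
  exact (mul_eq_zero.mp hzero).resolve_left (hcne x)
end
end

section
/- Let X be a divergence-free vector field on an oriented manifold (M, Ω), and Y a vector field with [Y, X] = h·X for a smooth function h. Then the function I = div(Y) + h is a first integral of X. -/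
noncomputable section

variable {E : Type*} [NormedAddCommGroup E] [NormedSpace ℝ E]

section Aux
variable {n : ℕ}

lemma eu_sum_apply {ι : Type*} (s : Finset ι) (f : ι → EuclideanSpace ℝ (Fin n)) (j : Fin n) :
    (∑ i ∈ s, f i) j = ∑ i ∈ s, f i j := by
  classical
  induction s using Finset.cons_induction with
  | empty => simp
  | cons a s ha ih => rw [Finset.sum_cons, Finset.sum_cons, PiLp.add_apply, ih]

lemma eu_sum_single (v : EuclideanSpace ℝ (Fin n)) :
    ∑ i, v i • EuclideanSpace.single i (1:ℝ) = v := by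
  ext j
  simp [eu_sum_apply, EuclideanSpace.single_apply]

lemma scalar_clm_coord (L : EuclideanSpace ℝ (Fin n) →L[ℝ] ℝ)
    (b : Fin n → EuclideanSpace ℝ (Fin n)) (hb : ∀ j, b j = EuclideanSpace.single j 1)
    (v : EuclideanSpace ℝ (Fin n)) :
    L v = ∑ j, v j * L (b j) := by
  have hbf : b = fun j => EuclideanSpace.single j (1:ℝ) := funext hb
  subst hbf
  conv_lhs => rw [← eu_sum_single v]
  rw [map_sum]
  simp [smul_eq_mul]

lemma clm_apply_coord (L : EuclideanSpace ℝ (Fin n) →L[ℝ] EuclideanSpace ℝ (Fin n))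
    (v : EuclideanSpace ℝ (Fin n)) (i : Fin n) :
    L v i = ∑ j, v j * L (EuclideanSpace.single j 1) i := by
  conv_lhs => rw [← eu_sum_single v]
  rw [map_sum, eu_sum_apply]
  simp

lemma tr_comm (A B : EuclideanSpace ℝ (Fin n) →L[ℝ] EuclideanSpace ℝ (Fin n))
    (b : Fin n → EuclideanSpace ℝ (Fin n)) (hb : ∀ j, b j = EuclideanSpace.single j 1) :
    ∑ i, A (B (b i)) i = ∑ i, B (A (b i)) i := by
  have hbf : b = fun j => EuclideanSpace.single j (1:ℝ) := funext hb
  subst hbf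
  have h1 : ∀ i : Fin n, A (B (EuclideanSpace.single i 1)) i
      = ∑ j, B (EuclideanSpace.single i (1:ℝ)) j * A (EuclideanSpace.single j 1) i :=
    fun i => clm_apply_coord A _ i
  have h2 : ∀ j : Fin n, B (A (EuclideanSpace.single j 1)) j
      = ∑ i, A (EuclideanSpace.single j (1:ℝ)) i * B (EuclideanSpace.single i 1) j :=
    fun j => clm_apply_coord B _ j
  simp_rw [h1, h2]
  rw [Finset.sum_comm]
  congr 1; ext j; congr 1; ext i; ring

lemma alt_trace (ω : EuclideanSpace ℝ (Fin n) [⋀^Fin n]→L[ℝ] ℝ)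
    (A : EuclideanSpace ℝ (Fin n) →L[ℝ] EuclideanSpace ℝ (Fin n))
    (b : Fin n → EuclideanSpace ℝ (Fin n)) (hb : ∀ j, b j = EuclideanSpace.single j 1) :
    ∑ i, ω (Function.update b i (A (b i))) = (∑ i, A (b i) i) * ω b := by
  have hbf : b = fun j => EuclideanSpace.single j (1:ℝ) := funext hb
  subst hbf
  set b : Fin n → EuclideanSpace ℝ (Fin n) := fun j => EuclideanSpace.single j (1:ℝ) with hbd
  have key : ∀ i : Fin n, ω (Function.update b i (A (b i))) = A (b i) i * ω b := by
    intro i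
    have hsum : ω (Function.update b i (∑ j, A (b i) j • b j))
        = ∑ j, ω (Function.update b i (A (b i) j • b j)) :=
      ω.toMultilinearMap.map_update_sum Finset.univ i (fun j => A (b i) j • b j) b
    have hstep : ω (Function.update b i (A (b i)))
        = ∑ j, ω (Function.update b i (A (b i) j • b j)) := by
      rw [← hsum]
      congr 1
      rw [eu_sum_single (A (b i))]
    rw [hstep]
    have hterm : ∀ j : Fin n, ω (Function.update b i (A (b i) j • b j))
        = A (b i) j * (if j = i then ω b else 0) := by
      intro j
      rw [ω.map_update_smul b i (A (b i) j) (b j), smul_eq_mul]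
      congr 1
      by_cases hji : j = i
      · subst hji; rw [Function.update_eq_self, if_pos rfl]
      · rw [if_neg hji]
        refine ω.map_eq_zero_of_eq _ ?_ (Ne.symm hji)
        show Function.update b i (b j) i = Function.update b i (b j) j
        rw [Function.update_self, Function.update_of_ne hji]
    simp_rw [hterm]
    simp [mul_ite, Finset.sum_ite_eq']
  simp_rw [key]
  rw [Finset.sum_mul]

lemma alt_ne (ω : EuclideanSpace ℝ (Fin n) [⋀^Fin n]→L[ℝ] ℝ) (hω : ω ≠ 0)
    (b : Fin n → EuclideanSpace ℝ (Fin n)) (hb : ∀ j, b j = EuclideanSpace.single j 1) :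
    ω b ≠ 0 := by
  have hbf : b = fun j => EuclideanSpace.single j (1:ℝ) := funext hb
  subst hbf
  intro h0
  apply hω
  set B := (EuclideanSpace.basisFun (Fin n) ℝ).toBasis with hB
  have hcoe : ⇑B = fun i => EuclideanSpace.single i (1:ℝ) := by
    funext i
    rw [hB, OrthonormalBasis.coe_toBasis, EuclideanSpace.basisFun_apply]
  have hdet := ω.toAlternatingMap.eq_smul_basis_det B
  rw [hcoe] at hdet
  have h0' : ω.toAlternatingMap (fun j => EuclideanSpace.single j (1:ℝ)) = 0 := h0
  have h2 : ω.toAlternatingMap = 0 := by rw [hdet, h0', zero_smul]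
  ext v
  have := congrArg (fun f => f v) (congrArg DFunLike.coe h2)
  simpa using this

lemma tau_hasFDerivAt (Z : EuclideanSpace ℝ (Fin n) → EuclideanSpace ℝ (Fin n))
    (hZ : Differentiable ℝ (fderiv ℝ Z))
    (b : Fin n → EuclideanSpace ℝ (Fin n)) (x : EuclideanSpace ℝ (Fin n)) :
    HasFDerivAt (fun y => ∑ i, fderiv ℝ Z y (b i) i)
      (∑ i, ((EuclideanSpace.proj i).comp
        (ContinuousLinearMap.apply ℝ (EuclideanSpace ℝ (Fin n)) (b i))).comp
          (fderiv ℝ (fderiv ℝ Z) x)) x := by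
  apply HasFDerivAt.fun_sum
  intro i _
  exact (((EuclideanSpace.proj i).comp
    (ContinuousLinearMap.apply ℝ (EuclideanSpace ℝ (Fin n)) (b i))).hasFDerivAt).comp x
      (hZ x).hasFDerivAt

end Aux


set_option maxHeartbeats 2000000 in
/-- (Hojman's theorem.) Let `X` be a smooth divergence-free vector field on an oriented
`n`-manifold `(M, Ω)` (modelled on `ℝⁿ`, with `Ω` a smooth nowhere-vanishing `n`-form),
i.e. `L_X Ω = 0`, and `Y` a smooth vector field with `[Y, X] = h·X` for a smooth function
`h`. Then `I = div(Y) + h` is a first integral of `X`: `X(div(Y) + h) = 0`,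
where `div Y` is defined by `L_Y Ω = (div Y)·Ω`. -/
theorem hojman_divergence_free {n : ℕ}
    (Ω : EuclideanSpace ℝ (Fin n) → (EuclideanSpace ℝ (Fin n) [⋀^Fin n]→L[ℝ] ℝ))
    (X Y : EuclideanSpace ℝ (Fin n) → EuclideanSpace ℝ (Fin n))
    (divY h : EuclideanSpace ℝ (Fin n) → ℝ)
    (hΩ : ∀ v, ContDiff ℝ (⊤ : ℕ∞) fun x => Ω x v)
    (hΩne : ∀ x, Ω x ≠ 0)
    (hX : ContDiff ℝ (⊤ : ℕ∞) X) (hY : ContDiff ℝ (⊤ : ℕ∞) Y) (hh : ContDiff ℝ (⊤ : ℕ∞) h)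
    (hdivXzero : ∀ x v, lieDerivApply X (fun y u => Ω y u) x v = 0)
    (hdivY : ∀ x v, lieDerivApply Y (fun y u => Ω y u) x v = divY x * Ω x v)
    (hYX : ∀ x, lieBracket Y X x = h x • X x) :
    ∀ x, fderiv ℝ (fun y => divY y + h y) x (X x) = 0 := by
  classical
  set b : Fin n → EuclideanSpace ℝ (Fin n) := fun j => EuclideanSpace.single j (1:ℝ) with hbdef
  have hb : ∀ j, b j = EuclideanSpace.single j 1 := fun j => rfl
  set g : EuclideanSpace ℝ (Fin n) → ℝ := fun y => Ω y b with hgdef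
  have hgy : ∀ y, Ω y b = g y := fun y => rfl
  have hg : ContDiff ℝ (⊤ : ℕ∞) g := hΩ b
  have hgne : ∀ y, g y ≠ 0 := fun y => alt_ne (Ω y) (hΩne y) b hb
  -- divergence identities at the basis
  have hA : ∀ y, fderiv ℝ g y (X y)
      = -((∑ i, fderiv ℝ X y (b i) i) * g y) := by
    intro y
    have h0 := hdivXzero y b
    simp only [lieDerivApply] at h0
    rw [alt_trace (Ω y) (fderiv ℝ X y) b hb, hgy] at h0
    have : fderiv ℝ (fun y' => Ω y' b) y (X y) = fderiv ℝ g y (X y) := rfl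
    rw [this] at h0
    linarith
  have hB : ∀ y, fderiv ℝ g y (Y y)
      = divY y * g y - (∑ i, fderiv ℝ Y y (b i) i) * g y := by
    intro y
    have h0 := hdivY y b
    simp only [lieDerivApply] at h0
    rw [alt_trace (Ω y) (fderiv ℝ Y y) b hb, hgy] at h0
    have heq : fderiv ℝ (fun y' => Ω y' b) y (Y y) = fderiv ℝ g y (Y y) := rfl
    rw [heq] at h0
    linarith
  -- differentiability package
  have hgd : Differentiable ℝ g := hg.differentiable (by simp)
  have hg' : Differentiable ℝ (fderiv ℝ g) := (hg.fderiv_right (m := 1) (WithTop.coe_le_coe.mpr le_top)).differentiable one_ne_zero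
  have hX' : Differentiable ℝ (fderiv ℝ X) := (hX.fderiv_right (m := 1) (WithTop.coe_le_coe.mpr le_top)).differentiable one_ne_zero
  have hY' : Differentiable ℝ (fderiv ℝ Y) := (hY.fderiv_right (m := 1) (WithTop.coe_le_coe.mpr le_top)).differentiable one_ne_zero
  intro x
  -- HasFDerivAt facts at x
  have Hg : HasFDerivAt g (fderiv ℝ g x) x := (hgd x).hasFDerivAt
  have HDg : HasFDerivAt (fderiv ℝ g) (fderiv ℝ (fderiv ℝ g) x) x := (hg' x).hasFDerivAt
  have HXf : HasFDerivAt X (fderiv ℝ X x) x := ((hX.differentiable (by simp)) x).hasFDerivAt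
  have HYf : HasFDerivAt Y (fderiv ℝ Y x) x := ((hY.differentiable (by simp)) x).hasFDerivAt
  have HDX : HasFDerivAt (fderiv ℝ X) (fderiv ℝ (fderiv ℝ X) x) x := (hX' x).hasFDerivAt
  have HDY : HasFDerivAt (fderiv ℝ Y) (fderiv ℝ (fderiv ℝ Y) x) x := (hY' x).hasFDerivAt
  have Hhf : HasFDerivAt h (fderiv ℝ h x) x := ((hh.differentiable (by simp)) x).hasFDerivAt
  have HτX := tau_hasFDerivAt X hX' b x
  have HτY := tau_hasFDerivAt Y hY' b x
  -- abbreviations for second-derivative traces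
  set TX := ∑ i, ((EuclideanSpace.proj i).comp
      (ContinuousLinearMap.apply ℝ (EuclideanSpace ℝ (Fin n)) (b i))).comp
        (fderiv ℝ (fderiv ℝ X) x) with hTX
  set TY := ∑ i, ((EuclideanSpace.proj i).comp
      (ContinuousLinearMap.apply ℝ (EuclideanSpace ℝ (Fin n)) (b i))).comp
        (fderiv ℝ (fderiv ℝ Y) x) with hTY
  have hTXapp : ∀ w, TX w = ∑ i, fderiv ℝ (fderiv ℝ X) x w (b i) i := by
    intro w
    rw [hTX]
    simp [ContinuousLinearMap.sum_apply]
  have hTYapp : ∀ w, TY w = ∑ i, fderiv ℝ (fderiv ℝ Y) x w (b i) i := by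
    intro w
    rw [hTY]
    simp [ContinuousLinearMap.sum_apply]
  -- symmetry of second derivatives
  have hsymg : ∀ v w, fderiv ℝ (fderiv ℝ g) x v w = fderiv ℝ (fderiv ℝ g) x w v :=
    hg.contDiffAt.isSymmSndFDerivAt (by simp; exact WithTop.coe_le_coe.mpr le_top)
  have hsymX : ∀ v w, fderiv ℝ (fderiv ℝ X) x v w = fderiv ℝ (fderiv ℝ X) x w v :=
    hX.contDiffAt.isSymmSndFDerivAt (by simp; exact WithTop.coe_le_coe.mpr le_top)
  have hsymY : ∀ v w, fderiv ℝ (fderiv ℝ Y) x v w = fderiv ℝ (fderiv ℝ Y) x w v :=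
    hY.contDiffAt.isSymmSndFDerivAt (by simp; exact WithTop.coe_le_coe.mpr le_top)
  -- differentiate the div-free identity (hA) at x, in direction Y x
  have hfunA : (fun y => fderiv ℝ g y (X y))
      = (fun y => -((∑ i, fderiv ℝ X y (b i) i) * g y)) := funext hA
  have HL : HasFDerivAt (fun y => fderiv ℝ g y (X y))
      ((fderiv ℝ g x).comp (fderiv ℝ X x) + (fderiv ℝ (fderiv ℝ g) x).flip (X x)) x :=
    HDg.clm_apply HXf
  have HR : HasFDerivAt (fun y => -((∑ i, fderiv ℝ X y (b i) i) * g y))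
      (-((∑ i, fderiv ℝ X x (b i) i) • fderiv ℝ g x + g x • TX)) x := (HτX.mul Hg).neg
  rw [← hfunA] at HR
  have heqA := HL.unique HR
  have hA' : fderiv ℝ g x (fderiv ℝ X x (Y x)) + fderiv ℝ (fderiv ℝ g) x (Y x) (X x)
      = -((∑ i, fderiv ℝ X x (b i) i) * fderiv ℝ g x (Y x) + g x * TX (Y x)) := by
    have := congrArg (fun (L : EuclideanSpace ℝ (Fin n) →L[ℝ] ℝ) => L (Y x)) heqA
    simpa [ContinuousLinearMap.add_apply, ContinuousLinearMap.comp_apply,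
      ContinuousLinearMap.flip_apply, ContinuousLinearMap.neg_apply,
      ContinuousLinearMap.smul_apply, smul_eq_mul] using this
  -- differentiate the bracket identity at x, take traces
  have hbr : ∀ y, fderiv ℝ X y (Y y) - fderiv ℝ Y y (X y) = h y • X y := by
    intro y
    have := hYX y
    simpa [lieBracket] using this
  have hfunC : (fun y => fderiv ℝ X y (Y y) - fderiv ℝ Y y (X y))
      = (fun y => h y • X y) := funext hbr
  have HL2 : HasFDerivAt (fun y => fderiv ℝ X y (Y y) - fderiv ℝ Y y (X y))
      (((fderiv ℝ X x).comp (fderiv ℝ Y x) + (fderiv ℝ (fderiv ℝ X) x).flip (Y x))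
        - ((fderiv ℝ Y x).comp (fderiv ℝ X x) + (fderiv ℝ (fderiv ℝ Y) x).flip (X x))) x :=
    (HDX.clm_apply HYf).sub (HDY.clm_apply HXf)
  have HR2 : HasFDerivAt (fun y => h y • X y)
      (h x • fderiv ℝ X x + (fderiv ℝ h x).smulRight (X x)) x := Hhf.smul HXf
  rw [← hfunC] at HR2
  have heqC := HL2.unique HR2
  have hCsum : ∑ i, (fderiv ℝ X x (fderiv ℝ Y x (b i)) i
        + fderiv ℝ (fderiv ℝ X) x (b i) (Y x) i
        - (fderiv ℝ Y x (fderiv ℝ X x (b i)) i + fderiv ℝ (fderiv ℝ Y) x (b i) (X x) i))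
      = ∑ i, (h x * fderiv ℝ X x (b i) i + fderiv ℝ h x (b i) * X x i) := by
    apply Finset.sum_congr rfl
    intro i _
    have := congrArg (fun (L : EuclideanSpace ℝ (Fin n) →L[ℝ] EuclideanSpace ℝ (Fin n))
      => L (b i) i) heqC
    simpa [ContinuousLinearMap.add_apply, ContinuousLinearMap.sub_apply,
      ContinuousLinearMap.comp_apply, ContinuousLinearMap.flip_apply,
      ContinuousLinearMap.smul_apply, ContinuousLinearMap.smulRight_apply,
      PiLp.add_apply, PiLp.sub_apply, PiLp.smul_apply, smul_eq_mul] using this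
  have hC : TX (Y x) - TY (X x)
      = fderiv ℝ h x (X x) + h x * (∑ i, fderiv ℝ X x (b i) i) := by
    have e1 : ∑ i, fderiv ℝ X x (fderiv ℝ Y x (b i)) i
        = ∑ i, fderiv ℝ Y x (fderiv ℝ X x (b i)) i := tr_comm _ _ b hb
    have e2 : ∑ i, fderiv ℝ (fderiv ℝ X) x (b i) (Y x) i = TX (Y x) := by
      rw [hTXapp]
      exact Finset.sum_congr rfl fun i _ => by rw [hsymX (b i) (Y x)]
    have e3 : ∑ i, fderiv ℝ (fderiv ℝ Y) x (b i) (X x) i = TY (X x) := by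
      rw [hTYapp]
      exact Finset.sum_congr rfl fun i _ => by rw [hsymY (b i) (X x)]
    have e4 : ∑ i, fderiv ℝ h x (b i) * X x i = fderiv ℝ h x (X x) := by
      rw [scalar_clm_coord (fderiv ℝ h x) b hb (X x)]
      exact Finset.sum_congr rfl fun i _ => mul_comm _ _
    have hL : ∑ i, (fderiv ℝ X x (fderiv ℝ Y x (b i)) i
          + fderiv ℝ (fderiv ℝ X) x (b i) (Y x) i
          - (fderiv ℝ Y x (fderiv ℝ X x (b i)) i + fderiv ℝ (fderiv ℝ Y) x (b i) (X x) i))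
        = TX (Y x) - TY (X x) := by
      rw [Finset.sum_sub_distrib, Finset.sum_add_distrib, Finset.sum_add_distrib, e1, e2, e3]
      ring
    have hR : ∑ i, (h x * fderiv ℝ X x (b i) i + fderiv ℝ h x (b i) * X x i)
        = h x * (∑ i, fderiv ℝ X x (b i) i) + fderiv ℝ h x (X x) := by
      rw [Finset.sum_add_distrib, ← Finset.mul_sum, e4]
    rw [hL, hR] at hCsum
    linarith
  -- express divY explicitly and differentiate
  have hdivYfun : ∀ y, divY y
      = (fderiv ℝ g y (Y y) + (∑ i, fderiv ℝ Y y (b i) i) * g y) * (g y)⁻¹ := by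
    intro y
    have hmul : divY y * g y
        = fderiv ℝ g y (Y y) + (∑ i, fderiv ℝ Y y (b i) i) * g y := by
      have := hB y
      linarith
    rw [← hmul]
    exact (mul_inv_cancel_right₀ (hgne y) _).symm
  have Hp : HasFDerivAt (fun y => fderiv ℝ g y (Y y))
      ((fderiv ℝ g x).comp (fderiv ℝ Y x) + (fderiv ℝ (fderiv ℝ g) x).flip (Y x)) x :=
    HDg.clm_apply HYf
  have HτYg : HasFDerivAt (fun y => (∑ i, fderiv ℝ Y y (b i) i) * g y)
      ((∑ i, fderiv ℝ Y x (b i) i) • fderiv ℝ g x + g x • TY) x := HτY.mul Hg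
  have Hψ := Hp.add HτYg
  have Hinv : HasFDerivAt (fun y => (g y)⁻¹)
      ((-ContinuousLinearMap.mulLeftRight ℝ ℝ (g x)⁻¹ (g x)⁻¹).comp (fderiv ℝ g x)) x :=
    (hasFDerivAt_inv' (hgne x)).comp x Hg
  have Hdv := Hψ.mul Hinv
  have HdivY : HasFDerivAt divY
      (((fun y => fderiv ℝ g y (Y y) + (∑ i, fderiv ℝ Y y (b i) i) * g y) x •
          (-ContinuousLinearMap.mulLeftRight ℝ ℝ (g x)⁻¹ (g x)⁻¹).comp (fderiv ℝ g x)) +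
        ((fun y => (g y)⁻¹) x •
          (((fderiv ℝ g x).comp (fderiv ℝ Y x) + (fderiv ℝ (fderiv ℝ g) x).flip (Y x)) +
            ((∑ i, fderiv ℝ Y x (b i) i) • fderiv ℝ g x + g x • TY)))) x :=
    Hdv.congr_of_eventuallyEq (Filter.Eventually.of_forall hdivYfun)
  have Htot := HdivY.fun_add Hhf
  rw [Htot.fderiv]
  simp only [ContinuousLinearMap.add_apply, ContinuousLinearMap.comp_apply,
    ContinuousLinearMap.flip_apply, ContinuousLinearMap.smul_apply,
    ContinuousLinearMap.neg_apply, ContinuousLinearMap.mulLeftRight_apply,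
    smul_eq_mul]
  have hRS : fderiv ℝ g x (fderiv ℝ Y x (X x)) + fderiv ℝ (fderiv ℝ g) x (X x) (Y x)
      = -((∑ i, fderiv ℝ X x (b i) i) * fderiv ℝ g x (Y x)) - g x * TX (Y x)
        - h x * fderiv ℝ g x (X x) := by
    have hxbr : fderiv ℝ X x (Y x) = h x • X x + fderiv ℝ Y x (X x) :=
      sub_eq_iff_eq_add.mp (hbr x)
    have hdg : fderiv ℝ g x (fderiv ℝ X x (Y x))
        = h x * fderiv ℝ g x (X x) + fderiv ℝ g x (fderiv ℝ Y x (X x)) := by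
      rw [hxbr, map_add, map_smul, smul_eq_mul]
    have hs := hsymg (Y x) (X x)
    linarith [hA']
  have hTYX : TY (X x) = TX (Y x) - fderiv ℝ h x (X x)
      - h x * (∑ i, fderiv ℝ X x (b i) i) := by linarith [hC]
  have hQ := hA x
  rw [hRS, hQ, hTYX]
  field_simp [hgne x]
  ring
end
end

section
/- Let X be a vector field on an oriented manifold (M, Ω) admitting a positive Jacobi multiplier R (div(RX) = 0), and let Y satisfy [Y, X] = h·X. Then I = div(Y) + Y(log R) + h is a first integral of X. -/
noncomputable section

variable {E : Type*} [NormedAddCommGroup E] [NormedSpace ℝ E]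

noncomputable section
namespace HojmanAux
variable {n : ℕ}
abbrev En (n : ℕ) := EuclideanSpace ℝ (Fin n)
def bb (n : ℕ) : Module.Basis (Fin n) ℝ (En n) := (EuclideanSpace.basisFun (Fin n) ℝ).toBasis

lemma expand (w : En n) : w = ∑ i, w i • bb n i := by
  have := (bb n).sum_repr w
  simp only [bb, OrthonormalBasis.coe_toBasis_repr_apply, EuclideanSpace.basisFun_repr,
    OrthonormalBasis.coe_toBasis] at this ⊢
  exact this.symm

lemma onedim (ω : (En n) [⋀^Fin n]→L[ℝ] ℝ) (v : Fin n → En n) :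
    ω v = (bb n).det v * ω (⇑(bb n)) := by
  have h := ω.toAlternatingMap.eq_smul_basis_det (bb n)
  have h2 : ω.toAlternatingMap v = (ω.toAlternatingMap ⇑(bb n) • (bb n).det) v := by rw [← h]
  simpa [mul_comm] using h2

lemma det_update (i : Fin n) (w : En n) :
    (bb n).det (Function.update (⇑(bb n)) i w) = w i := by
  conv_lhs => rw [expand w]
  rw [AlternatingMap.map_update_sum]
  rw [Finset.sum_eq_single i]
  · rw [AlternatingMap.map_update_smul, Function.update_eq_self, Module.Basis.det_self,
      smul_eq_mul, mul_one]
  · intro j _ hj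
    rw [AlternatingMap.map_update_smul]
    rw [(bb n).det.map_eq_zero_of_eq (Function.update (⇑(bb n)) i ((bb n) j)) (i := i) (j := j)]
    · simp
    · simp [Function.update_self, Function.update_of_ne hj]
    · exact hj.symm
  · simp

lemma clm_expand (φ : En n →L[ℝ] ℝ) (w : En n) : φ w = ∑ i, w i * φ (bb n i) := by
  conv_lhs => rw [expand w]
  rw [map_sum]
  simp [smul_eq_mul]

lemma coord_expand (A : En n →L[ℝ] En n) (w : En n) (i : Fin n) :
    (A w) i = ∑ j, w j * (A (bb n j)) i := by
  have : (A w) i = EuclideanSpace.proj (𝕜 := ℝ) i (A w) := rfl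
  rw [this, ← ContinuousLinearMap.comp_apply, clm_expand]
  rfl

lemma tau_comm (A B : En n →L[ℝ] En n) :
    ∑ i, (A (B (bb n i))) i = ∑ i, (B (A (bb n i))) i := by
  have h1 : ∀ i, (A (B (bb n i))) i = ∑ j, (B (bb n i)) j * (A (bb n j)) i :=
    fun i => coord_expand A _ i
  have h2 : ∀ i, (B (A (bb n i))) i = ∑ j, (A (bb n i)) j * (B (bb n j)) i :=
    fun i => coord_expand B _ i
  simp only [h1, h2]
  rw [Finset.sum_comm]
  congr 1; ext j; congr 1; ext i; ring

lemma fderiv_fderiv_hasfderiv {Z : En n → En n} (hZ : ContDiff ℝ (⊤ : ℕ∞) Z) (x : En n) :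
    HasFDerivAt (fderiv ℝ Z) (fderiv ℝ (fderiv ℝ Z) x) x := by
  have h2 : ContDiff ℝ 2 Z := hZ.of_le (WithTop.coe_le_coe.mpr (le_top : (2:ℕ∞) ≤ ⊤))
  have : ContDiff ℝ 1 (fderiv ℝ Z) := h2.fderiv_right (by norm_num)
  exact (this.differentiable one_ne_zero x).hasFDerivAt

/-- coordinate divergence -/
def dtau (Z : En n → En n) (x : En n) : ℝ := ∑ i, (fderiv ℝ Z x (bb n i)) i

lemma dtau_hasfderiv {Z : En n → En n} (hZ : ContDiff ℝ (⊤ : ℕ∞) Z) (x : En n) :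
    HasFDerivAt (dtau Z)
      (∑ i, (EuclideanSpace.proj (𝕜 := ℝ) i).comp
        ((fderiv ℝ (fderiv ℝ Z) x).flip (bb n i))) x := by
  apply HasFDerivAt.fun_sum
  intro i _
  have h1 := (fderiv_fderiv_hasfderiv hZ x).clm_apply (hasFDerivAt_const (bb n i) x)
  have h2 := (EuclideanSpace.proj (𝕜 := ℝ) i).hasFDerivAt.comp x h1
  convert h2 using 1
  ext u
  simp [ContinuousLinearMap.flip_apply]
  simp

lemma dtau_fderiv_apply {Z : En n → En n} (hZ : ContDiff ℝ (⊤ : ℕ∞) Z) (x u : En n) :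
    fderiv ℝ (dtau Z) x u = ∑ i, (fderiv ℝ (fderiv ℝ Z) x u (bb n i)) i := by
  rw [(dtau_hasfderiv hZ x).fderiv]
  simp [ContinuousLinearMap.flip_apply]

lemma sym2 {Z : En n → En n} (hZ : ContDiff ℝ (⊤ : ℕ∞) Z) (x u v : En n) :
    fderiv ℝ (fderiv ℝ Z) x u v = fderiv ℝ (fderiv ℝ Z) x v u :=
  (hZ.contDiffAt.isSymmSndFDerivAt (by rw [minSmoothness_of_isRCLikeNormedField]; exact WithTop.coe_le_coe.mpr (le_top : (2:ℕ∞) ≤ ⊤))) u v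


lemma sym2' {G : Type*} [NormedAddCommGroup G] [NormedSpace ℝ G] {f : En n → G}
    (hf : ContDiff ℝ (⊤ : ℕ∞) f) (x u v : En n) :
    fderiv ℝ (fderiv ℝ f) x u v = fderiv ℝ (fderiv ℝ f) x v u :=
  (hf.contDiffAt.isSymmSndFDerivAt (by rw [minSmoothness_of_isRCLikeNormedField]; exact WithTop.coe_le_coe.mpr (le_top : (2:ℕ∞) ≤ ⊤))) u v

lemma fderiv_fderiv_hasfderiv' {G : Type*} [NormedAddCommGroup G] [NormedSpace ℝ G]
    {f : En n → G} (hf : ContDiff ℝ (⊤ : ℕ∞) f) (x : En n) :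
    HasFDerivAt (fderiv ℝ f) (fderiv ℝ (fderiv ℝ f) x) x := by
  have h2 : ContDiff ℝ 2 f := hf.of_le (WithTop.coe_le_coe.mpr (le_top : (2:ℕ∞) ≤ ⊤))
  have : ContDiff ℝ 1 (fderiv ℝ f) := h2.fderiv_right (by norm_num)
  exact (this.differentiable one_ne_zero x).hasFDerivAt

lemma div_comm {X Y : En n → En n} {h : En n → ℝ}
    (hX : ContDiff ℝ (⊤ : ℕ∞) X) (hY : ContDiff ℝ (⊤ : ℕ∞) Y) (hh : ContDiff ℝ (⊤ : ℕ∞) h)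
    (hB : ∀ x, fderiv ℝ X x (Y x) - fderiv ℝ Y x (X x) = h x • X x) (x : En n) :
    fderiv ℝ h x (X x) + h x * dtau X x
      = fderiv ℝ (dtau X) x (Y x) - fderiv ℝ (dtau Y) x (X x) := by
  have hBe : (fun y => fderiv ℝ X y (Y y) - fderiv ℝ Y y (X y)) = fun y => h y • X y :=
    funext hB
  have way1 : HasFDerivAt (fun y => fderiv ℝ X y (Y y) - fderiv ℝ Y y (X y))
      (h x • fderiv ℝ X x + (fderiv ℝ h x).smulRight (X x)) x := by
    rw [hBe]
    exact ((hh.differentiable (by simp) x).hasFDerivAt).smul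
      ((hX.differentiable (by simp) x).hasFDerivAt)
  have way2 : HasFDerivAt (fun y => fderiv ℝ X y (Y y) - fderiv ℝ Y y (X y))
      (((fderiv ℝ X x).comp (fderiv ℝ Y x) + (fderiv ℝ (fderiv ℝ X) x).flip (Y x))
        - ((fderiv ℝ Y x).comp (fderiv ℝ X x) + (fderiv ℝ (fderiv ℝ Y) x).flip (X x))) x :=
    ((fderiv_fderiv_hasfderiv hX x).clm_apply ((hY.differentiable (by simp) x).hasFDerivAt)).sub
      ((fderiv_fderiv_hasfderiv hY x).clm_apply ((hX.differentiable (by simp) x).hasFDerivAt))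
  have heq := way1.unique way2
  have happ : ∀ i : Fin n,
      h x * (fderiv ℝ X x (bb n i)) i + fderiv ℝ h x (bb n i) * (X x) i
        = (fderiv ℝ X x (fderiv ℝ Y x (bb n i))) i
          + (fderiv ℝ (fderiv ℝ X) x (bb n i) (Y x)) i
          - ((fderiv ℝ Y x (fderiv ℝ X x (bb n i))) i
            + (fderiv ℝ (fderiv ℝ Y) x (bb n i) (X x)) i) := by
    intro i
    have := congrArg (fun (L : En n →L[ℝ] En n) => (L (bb n i)) i) heq
    simpa [ContinuousLinearMap.flip_apply, ContinuousLinearMap.smulRight_apply] using this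
  have hsum := Finset.sum_congr rfl (fun i (_ : i ∈ Finset.univ) => happ i)
  rw [Finset.sum_add_distrib, ← Finset.mul_sum] at hsum
  have hXx : ∑ i, fderiv ℝ h x (bb n i) * (X x) i = fderiv ℝ h x (X x) := by
    rw [clm_expand (fderiv ℝ h x) (X x)]
    exact Finset.sum_congr rfl fun i _ => mul_comm _ _
  rw [hXx] at hsum
  have hrhs : ∑ i, ((fderiv ℝ X x (fderiv ℝ Y x (bb n i))) i
          + (fderiv ℝ (fderiv ℝ X) x (bb n i) (Y x)) i
          - ((fderiv ℝ Y x (fderiv ℝ X x (bb n i))) i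
            + (fderiv ℝ (fderiv ℝ Y) x (bb n i) (X x)) i))
      = fderiv ℝ (dtau X) x (Y x) - fderiv ℝ (dtau Y) x (X x) := by
    have e1 : ∑ i, (fderiv ℝ X x (fderiv ℝ Y x (bb n i))) i
        = ∑ i, (fderiv ℝ Y x (fderiv ℝ X x (bb n i))) i := tau_comm _ _
    have e2 : ∑ i, (fderiv ℝ (fderiv ℝ X) x (bb n i) (Y x)) i
        = fderiv ℝ (dtau X) x (Y x) := by
      rw [dtau_fderiv_apply hX x (Y x)]
      exact Finset.sum_congr rfl fun i _ => by rw [sym2 hX x (bb n i) (Y x)]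
    have e3 : ∑ i, (fderiv ℝ (fderiv ℝ Y) x (bb n i) (X x)) i
        = fderiv ℝ (dtau Y) x (X x) := by
      rw [dtau_fderiv_apply hY x (X x)]
      exact Finset.sum_congr rfl fun i _ => by rw [sym2 hY x (bb n i) (X x)]
    have expand : ∀ i, (fderiv ℝ X x (fderiv ℝ Y x (bb n i))) i
          + (fderiv ℝ (fderiv ℝ X) x (bb n i) (Y x)) i
          - ((fderiv ℝ Y x (fderiv ℝ X x (bb n i))) i
            + (fderiv ℝ (fderiv ℝ Y) x (bb n i) (X x)) i)
        = ((fderiv ℝ X x (fderiv ℝ Y x (bb n i))) i - (fderiv ℝ Y x (fderiv ℝ X x (bb n i))) i)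
          + ((fderiv ℝ (fderiv ℝ X) x (bb n i) (Y x)) i
            - (fderiv ℝ (fderiv ℝ Y) x (bb n i) (X x)) i) := fun i => by ring
    simp only [expand]
    rw [Finset.sum_add_distrib, Finset.sum_sub_distrib, Finset.sum_sub_distrib, e1, ← e2, ← e3]
    ring
  rw [hrhs] at hsum
  have hd : dtau X x = ∑ i, (fderiv ℝ X x (bb n i)) i := rfl
  rw [hd]
  linarith [hsum]


lemma F_deriv {F : En n → ℝ} {X : En n → En n}
    (hF : ContDiff ℝ (⊤ : ℕ∞) F) (hX : ContDiff ℝ (⊤ : ℕ∞) X)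
    (hJ : ∀ x, fderiv ℝ F x (X x) = -(F x * dtau X x)) (x u : En n) :
    fderiv ℝ (fderiv ℝ F) x u (X x) + fderiv ℝ F x (fderiv ℝ X x u)
      = -(F x * fderiv ℝ (dtau X) x u + dtau X x * fderiv ℝ F x u) := by
  have hEq : (fun y => fderiv ℝ F y (X y)) = fun y => -(F y * dtau X y) := funext hJ
  have way1 : HasFDerivAt (fun y => fderiv ℝ F y (X y))
      ((fderiv ℝ F x).comp (fderiv ℝ X x) + (fderiv ℝ (fderiv ℝ F) x).flip (X x)) x :=
    (fderiv_fderiv_hasfderiv' hF x).clm_apply ((hX.differentiable (by simp) x).hasFDerivAt)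
  have hmul := (((hF.differentiable (by simp) x).hasFDerivAt).mul (dtau_hasfderiv hX x)).neg
  have way2 : HasFDerivAt (fun y => fderiv ℝ F y (X y))
      (-(F x • (∑ i, (EuclideanSpace.proj (𝕜 := ℝ) i).comp
          ((fderiv ℝ (fderiv ℝ X) x).flip (bb n i))) + dtau X x • fderiv ℝ F x)) x := by
    rw [hEq]; exact hmul
  have heq := way1.unique way2
  have := congrArg (fun (L : En n →L[ℝ] ℝ) => L u) heq
  simp only [ContinuousLinearMap.add_apply, ContinuousLinearMap.comp_apply,
    ContinuousLinearMap.flip_apply, ContinuousLinearMap.neg_apply,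
    ContinuousLinearMap.smul_apply, smul_eq_mul] at this
  have hdt : (∑ i, (EuclideanSpace.proj (𝕜 := ℝ) i).comp
      ((fderiv ℝ (fderiv ℝ X) x).flip (bb n i))) u = fderiv ℝ (dtau X) x u := by
    rw [(dtau_hasfderiv hX x).fderiv]
  rw [hdt] at this
  linarith [this]


lemma main_scalar {F h : En n → ℝ} {X Y : En n → En n}
    (hF : ContDiff ℝ (⊤ : ℕ∞) F) (hX : ContDiff ℝ (⊤ : ℕ∞) X) (hY : ContDiff ℝ (⊤ : ℕ∞) Y)
    (hh : ContDiff ℝ (⊤ : ℕ∞) h) (hFne : ∀ x, F x ≠ 0)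
    (hJ : ∀ x, fderiv ℝ F x (X x) = -(F x * dtau X x))
    (hB : ∀ x, fderiv ℝ X x (Y x) - fderiv ℝ Y x (X x) = h x • X x) (x₀ : En n) :
    fderiv ℝ (fun y => fderiv ℝ F y (Y y) * (F y)⁻¹ + dtau Y y + h y) x₀ (X x₀) = 0 := by
  have hGd : HasFDerivAt (fun y => fderiv ℝ F y (Y y))
      ((fderiv ℝ F x₀).comp (fderiv ℝ Y x₀) + (fderiv ℝ (fderiv ℝ F) x₀).flip (Y x₀)) x₀ :=
    (fderiv_fderiv_hasfderiv' hF x₀).clm_apply ((hY.differentiable (by simp) x₀).hasFDerivAt)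
  have hInv : HasFDerivAt (fun y => (F y)⁻¹)
      ((ContinuousLinearMap.smulRight (1 : ℝ →L[ℝ] ℝ)
        (-(F x₀ ^ 2)⁻¹)).comp (fderiv ℝ F x₀)) x₀ :=
    (hasFDerivAt_inv (hFne x₀)).comp x₀ ((hF.differentiable (by simp) x₀).hasFDerivAt)
  have hφ := ((hGd.fun_mul hInv).fun_add (dtau_hasfderiv hY x₀)).fun_add
    ((hh.differentiable (by simp) x₀).hasFDerivAt)
  rw [hφ.fderiv]
  simp only [ContinuousLinearMap.add_apply, ContinuousLinearMap.smul_apply,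
    ContinuousLinearMap.comp_apply, ContinuousLinearMap.flip_apply,
    ContinuousLinearMap.smulRight_apply, ContinuousLinearMap.one_apply, smul_eq_mul]
  have hdtY : (∑ i, (EuclideanSpace.proj (𝕜 := ℝ) i).comp
      ((fderiv ℝ (fderiv ℝ Y) x₀).flip (bb n i))) (X x₀) = fderiv ℝ (dtau Y) x₀ (X x₀) := by
    rw [(dtau_hasfderiv hY x₀).fderiv]
  rw [hdtY]
  rw [sym2' hF x₀ (X x₀) (Y x₀)]
  have e1 : fderiv ℝ F x₀ (X x₀) = -(F x₀ * dtau X x₀) := hJ x₀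
  have e3 : fderiv ℝ (fderiv ℝ F) x₀ (Y x₀) (X x₀)
        + fderiv ℝ F x₀ (fderiv ℝ X x₀ (Y x₀))
      = -(F x₀ * fderiv ℝ (dtau X) x₀ (Y x₀) + dtau X x₀ * fderiv ℝ F x₀ (Y x₀)) :=
    F_deriv hF hX hJ x₀ (Y x₀)
  have e4 : fderiv ℝ F x₀ (fderiv ℝ X x₀ (Y x₀)) - fderiv ℝ F x₀ (fderiv ℝ Y x₀ (X x₀))
      = h x₀ * fderiv ℝ F x₀ (X x₀) := by
    have := congrArg (fun w => fderiv ℝ F x₀ w) (hB x₀)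
    simpa [map_sub, map_smul, smul_eq_mul] using this
  have e5 : fderiv ℝ h x₀ (X x₀) + h x₀ * dtau X x₀
      = fderiv ℝ (dtau X) x₀ (Y x₀) - fderiv ℝ (dtau Y) x₀ (X x₀) :=
    div_comm hX hY hh hB x₀
  have hFx0 : F x₀ ≠ 0 := hFne x₀
  field_simp
  linear_combination (-(fderiv ℝ F x₀ (Y x₀)) - F x₀ * h x₀) * e1
    + F x₀ * e3 - F x₀ * e4 + F x₀^2 * e5

end HojmanAux

open HojmanAux in
/-- Let `X` be a smooth vector field on an oriented `n`-manifold `(M, Ω)` (modelled on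
`ℝⁿ`, with `Ω` a smooth nowhere-vanishing `n`-form) admitting a positive Jacobi
multiplier `R` (i.e. `L_X(R·Ω) = 0`, equivalently `div(RX) = 0`), and let the smooth
vector field `Y` satisfy `[Y, X] = h·X` for a smooth function `h`. Then
`I = div(Y) + Y(log R) + h` is a first integral of `X`,
where `div Y` is defined by `L_Y Ω = (div Y)·Ω`. -/
theorem hojman_jacobi_multiplier {n : ℕ}
    (Ω : EuclideanSpace ℝ (Fin n) → (EuclideanSpace ℝ (Fin n) [⋀^Fin n]→L[ℝ] ℝ))
    (X Y : EuclideanSpace ℝ (Fin n) → EuclideanSpace ℝ (Fin n))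
    (divY h R : EuclideanSpace ℝ (Fin n) → ℝ)
    (hΩ : ∀ v, ContDiff ℝ (⊤ : ℕ∞) fun x => Ω x v)
    (hΩne : ∀ x, Ω x ≠ 0)
    (hX : ContDiff ℝ (⊤ : ℕ∞) X) (hY : ContDiff ℝ (⊤ : ℕ∞) Y) (hh : ContDiff ℝ (⊤ : ℕ∞) h)
    (hR : ContDiff ℝ (⊤ : ℕ∞) R) (hRpos : ∀ x, 0 < R x)
    (hJacobi : ∀ x v, lieDerivApply X (fun y u => R y * Ω y u) x v = 0)
    (hdivY : ∀ x v, lieDerivApply Y (fun y u => Ω y u) x v = divY x * Ω x v)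
    (hYX : ∀ x, lieBracket Y X x = h x • X x) :
    ∀ x, fderiv ℝ
      (fun y => divY y + fderiv ℝ (fun z => Real.log (R z)) y (Y y) + h y) x (X x) = 0 := by
  intro x₀
  have hc : ContDiff ℝ (⊤ : ℕ∞) (fun y => Ω y ⇑(bb n)) := hΩ _
  have hcne : ∀ x, Ω x ⇑(bb n) ≠ 0 := by
    intro x hx
    apply hΩne x
    ext v
    rw [onedim (Ω x) v, hx, mul_zero]
    simp
  have hF : ContDiff ℝ (⊤ : ℕ∞) (fun y => R y * Ω y ⇑(bb n)) := hR.mul hc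
  have hFne : ∀ x, R x * Ω x ⇑(bb n) ≠ 0 := fun x =>
    mul_ne_zero (ne_of_gt (hRpos x)) (hcne x)
  have hupd : ∀ (x : En n) (i : Fin n) (w : En n),
      Ω x (Function.update (⇑(bb n)) i w) = w i * Ω x ⇑(bb n) := by
    intro x i w
    rw [onedim (Ω x), det_update]
  -- scalar form of the Jacobi multiplier condition
  have hJ : ∀ x, fderiv ℝ (fun y => R y * Ω y ⇑(bb n)) x (X x)
      = -((fun y => R y * Ω y ⇑(bb n)) x * dtau X x) := by
    intro x
    have hthis := hJacobi x ⇑(bb n)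
    simp only [lieDerivApply] at hthis
    have hsum : ∑ i, R x * Ω x (Function.update (⇑(bb n)) i (fderiv ℝ X x (bb n i)))
        = R x * Ω x ⇑(bb n) * dtau X x := by
      rw [show dtau X x = ∑ i, (fderiv ℝ X x (bb n i)) i from rfl, Finset.mul_sum]
      refine Finset.sum_congr rfl fun i _ => ?_
      rw [hupd x i]
      ring
    rw [hsum] at hthis
    show fderiv ℝ (fun y => R y * Ω y ⇑(bb n)) x (X x) = -(R x * Ω x ⇑(bb n) * dtau X x)
    linarith [hthis]
  -- scalar form of the divergence of Y
  have hDY : ∀ y, divY y = fderiv ℝ (fun z => Ω z ⇑(bb n)) y (Y y) / Ω y ⇑(bb n) + dtau Y y := by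
    intro y
    have hthis := hdivY y ⇑(bb n)
    simp only [lieDerivApply] at hthis
    have hsum : ∑ i, Ω y (Function.update (⇑(bb n)) i (fderiv ℝ Y y (bb n i)))
        = dtau Y y * Ω y ⇑(bb n) := by
      rw [show dtau Y y = ∑ i, (fderiv ℝ Y y (bb n i)) i from rfl, Finset.sum_mul]
      exact Finset.sum_congr rfl fun i _ => hupd y i _
    rw [hsum] at hthis
    have h2 : Ω y ⇑(bb n) ≠ 0 := hcne y
    field_simp
    linarith [hthis]
  -- rewrite the goal function
  have hgoalfun : (fun y => divY y + fderiv ℝ (fun z => Real.log (R z)) y (Y y) + h y)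
      = fun y => fderiv ℝ (fun z => R z * Ω z ⇑(bb n)) y (Y y)
          * ((fun z => R z * Ω z ⇑(bb n)) y)⁻¹ + dtau Y y + h y := by
    funext y
    have hlog : fderiv ℝ (fun z => Real.log (R z)) y (Y y)
        = (R y)⁻¹ * fderiv ℝ R y (Y y) := by
      have hld := ((hR.differentiable (by simp) y).hasFDerivAt).log (ne_of_gt (hRpos y))
      rw [hld.fderiv]
      simp
    have hmul : fderiv ℝ (fun z => R z * Ω z ⇑(bb n)) y (Y y)
        = R y * fderiv ℝ (fun z => Ω z ⇑(bb n)) y (Y y)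
          + Ω y ⇑(bb n) * fderiv ℝ R y (Y y) := by
      have hd := (((hR.differentiable (by simp) y).hasFDerivAt).fun_mul
        ((hc.differentiable (by simp) y).hasFDerivAt)).fderiv
      rw [hd]
      simp only [ContinuousLinearMap.add_apply, ContinuousLinearMap.smul_apply, smul_eq_mul]
    rw [hlog, hmul, hDY y]
    have h1 : R y ≠ 0 := ne_of_gt (hRpos y)
    have h2 : Ω y ⇑(bb n) ≠ 0 := hcne y
    field_simp
    ring
  rw [hgoalfun]
  -- apply the scalar core lemma
  refine main_scalar hF hX hY hh hFne hJ ?_ x₀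
  intro x
  have := hYX x
  simpa [lieBracket] using this
end
end
end
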